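/- Define the 3×3 complex matrices M₁ = [[0, 2i, 0], [−2i, 0, 0], [0, 0, 0]], M₂ = [[0, 0, 0], [0, 0, −2i], [0, 2i, 0]], M₃ = [[0, 0, 2i], [0, 0, 0], [−2i, 0, 0]]. Say that an index j ∈ {1,2,3} labels the unordered pair {1,2} if j = 1, the pair {2,3} if j = 2, and the pair {1,3} if j = 3. Then for every n ≥ 1 and every (i₁,…,i_n) ∈ {1,2,3}ⁿ: (1) the (3,1) entry of the product M_{i₁}·M_{i₂}⋯M_{i_n} is nonzero if and only if there exists a sequence v₀, v₁, …, v_n ∈ {1,2,3} with v₀ = 3, v_n = 1, and for each j = 1,…,n the index i_j labels the pair {v_{j−1}, v_j} (in particular v_{j−1} ≠ v_j); and (2) the (3,2) entry of M_{i₁}⋯M_{i_n} is nonzero if and only if such a sequence exists with v₀ = 3 and v_n = 2. -/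
import Mathlib


/-- The matrices `M₁, M₂, M₃` (indexed by `0, 1, 2 : Fin 3`). -/
noncomputable def pathMatrix : Fin 3 → Matrix (Fin 3) (Fin 3) ℂ :=
  ![!![0, 2 * Complex.I, 0; -2 * Complex.I, 0, 0; 0, 0, 0],
    !![0, 0, 0; 0, 0, -2 * Complex.I; 0, 2 * Complex.I, 0],
    !![0, 0, 2 * Complex.I; 0, 0, 0; -2 * Complex.I, 0, 0]]

/-- `edgeLabels j a b` : the index `j` labels the unordered pair `{a, b}`, where the
vertices `e₁, e₂, e₃` are encoded as `0, 1, 2 : Fin 3` and the labels `1, 2, 3` as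
`0, 1, 2 : Fin 3`: label `1` ↔ `{e₁,e₂}`, label `2` ↔ `{e₂,e₃}`, label `3` ↔ `{e₁,e₃}`. -/
def edgeLabels (j a b : Fin 3) : Prop :=
  (j = 0 ∧ ((a = 0 ∧ b = 1) ∨ (a = 1 ∧ b = 0))) ∨
  (j = 1 ∧ ((a = 1 ∧ b = 2) ∨ (a = 2 ∧ b = 1))) ∨
  (j = 2 ∧ ((a = 0 ∧ b = 2) ∨ (a = 2 ∧ b = 0)))

instance (j a b : Fin 3) : Decidable (edgeLabels j a b) := by
  unfold edgeLabels; infer_instance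

lemma path_none (n : ℕ) (i : Fin (n + 1) → Fin 3) (a b : Fin 3)
    (h : ∀ x, ¬ edgeLabels (i 0) a x) :
    ¬ ∃ v : Fin (n + 1 + 1) → Fin 3, v 0 = a ∧ v (Fin.last (n + 1)) = b ∧
        ∀ j : Fin (n + 1), edgeLabels (i j) (v j.castSucc) (v j.succ) := by
  rintro ⟨v, h0, -, hc⟩
  have h1 := hc 0
  rw [show (0 : Fin (n+1)).castSucc = 0 from rfl, h0] at h1
  exact h _ h1

lemma path_split (n : ℕ) (i : Fin (n + 1) → Fin 3) (a b c : Fin 3)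
    (h : ∀ x, edgeLabels (i 0) a x ↔ x = c) :
    (∃ v : Fin (n + 1 + 1) → Fin 3, v 0 = a ∧ v (Fin.last (n + 1)) = b ∧
        ∀ j : Fin (n + 1), edgeLabels (i j) (v j.castSucc) (v j.succ)) ↔
    (∃ v : Fin (n + 1) → Fin 3, v 0 = c ∧ v (Fin.last n) = b ∧
        ∀ j : Fin n, edgeLabels (i j.succ) (v j.castSucc) (v j.succ)) := by
  constructor
  · rintro ⟨v, h0, hl, hc⟩
    refine ⟨fun j => v j.succ, ?_, ?_, ?_⟩
    · have h1 := hc 0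
      rw [show (0 : Fin (n+1)).castSucc = 0 from rfl, h0] at h1
      exact (h _).mp h1
    · show v (Fin.last n).succ = b
      rw [Fin.succ_last]; exact hl
    · intro j
      have h1 := hc j.succ
      rwa [← Fin.succ_castSucc] at h1
  · rintro ⟨v, h0, hl, hc⟩
    have hac : edgeLabels (i 0) a c := (h c).mpr rfl
    refine ⟨Fin.cases a v, by simp only [Fin.cases_zero], ?_, ?_⟩
    · rw [← Fin.succ_last]; simp only [Fin.cases_succ]; exact hl
    · intro j
      induction j using Fin.cases with
      | zero =>
        show edgeLabels (i 0) (Fin.cases a v (Fin.castSucc 0)) (Fin.cases a v (Fin.succ 0))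
        rw [show Fin.castSucc (0 : Fin (n+1)) = 0 from rfl, Fin.cases_zero, Fin.cases_succ, h0]
        exact hac
      | succ j =>
        show edgeLabels (i j.succ) (Fin.cases a v (Fin.castSucc j.succ)) (Fin.cases a v j.succ.succ)
        rw [← Fin.succ_castSucc, Fin.cases_succ, Fin.cases_succ]
        exact hc j

lemma key : ∀ (n : ℕ) (i : Fin n → Fin 3) (a b : Fin 3),
    (List.ofFn fun j => pathMatrix (i j)).prod a b ≠ 0 ↔
      ∃ v : Fin (n + 1) → Fin 3, v 0 = a ∧ v (Fin.last n) = b ∧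
        ∀ j : Fin n, edgeLabels (i j) (v j.castSucc) (v j.succ)
  | 0, i, a, b => by
    simp only [List.ofFn_zero, List.prod_nil, Matrix.one_apply]
    constructor
    · intro hne
      have hab : a = b := by by_contra hab; simp [hab] at hne
      exact ⟨fun _ => a, rfl, hab ▸ rfl, fun j => j.elim0⟩
    · rintro ⟨v, h0, hl, -⟩
      have hab : a = b := by rw [← h0, ← hl]; rfl
      simp [hab]
  | (n+1), i, a, b => by
    rw [List.ofFn_succ, List.prod_cons]
    have h3 : ∀ k : Fin 3, k = 0 ∨ k = 1 ∨ k = 2 := by decide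
    have IH := fun c => key n (fun j => i j.succ) c b
    rcases h3 (i 0) with h|h|h <;> rcases h3 a with ha|ha|ha <;> subst ha
    · refine Iff.trans ?_ ((IH 1).trans (path_split n i 0 b 1 (by rw [h]; decide)).symm)
      rw [h]
      simp [pathMatrix, Matrix.mul_apply, Fin.sum_univ_three, mul_ne_zero_iff, Complex.I_ne_zero]
    · refine Iff.trans ?_ ((IH 0).trans (path_split n i 1 b 0 (by rw [h]; decide)).symm)
      rw [h]
      simp [pathMatrix, Matrix.mul_apply, Fin.sum_univ_three, mul_ne_zero_iff, Complex.I_ne_zero]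
    · have hnone := path_none n i 2 b (by rw [h]; decide)
      rw [h]
      simp [pathMatrix, Matrix.mul_apply, Fin.sum_univ_three, hnone]
    · have hnone := path_none n i 0 b (by rw [h]; decide)
      rw [h]
      simp [pathMatrix, Matrix.mul_apply, Fin.sum_univ_three, hnone]
    · refine Iff.trans ?_ ((IH 2).trans (path_split n i 1 b 2 (by rw [h]; decide)).symm)
      rw [h]
      simp [pathMatrix, Matrix.mul_apply, Fin.sum_univ_three, mul_ne_zero_iff, Complex.I_ne_zero]
    · refine Iff.trans ?_ ((IH 1).trans (path_split n i 2 b 1 (by rw [h]; decide)).symm)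
      rw [h]
      simp [pathMatrix, Matrix.mul_apply, Fin.sum_univ_three, mul_ne_zero_iff, Complex.I_ne_zero]
    · refine Iff.trans ?_ ((IH 2).trans (path_split n i 0 b 2 (by rw [h]; decide)).symm)
      rw [h]
      simp [pathMatrix, Matrix.mul_apply, Fin.sum_univ_three, mul_ne_zero_iff, Complex.I_ne_zero]
    · have hnone := path_none n i 1 b (by rw [h]; decide)
      rw [h]
      simp [pathMatrix, Matrix.mul_apply, Fin.sum_univ_three, hnone]
    · refine Iff.trans ?_ ((IH 0).trans (path_split n i 2 b 0 (by rw [h]; decide)).symm)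
      rw [h]
      simp [pathMatrix, Matrix.mul_apply, Fin.sum_univ_three, mul_ne_zero_iff, Complex.I_ne_zero]

theorem matrix_product_entry_nonzero_iff_path
    (n : ℕ) (hn : 1 ≤ n) (i : Fin n → Fin 3) :
    (((List.ofFn fun j => pathMatrix (i j)).prod 2 0 ≠ 0 ↔
      ∃ v : Fin (n + 1) → Fin 3, v 0 = 2 ∧ v (Fin.last n) = 0 ∧
        ∀ j : Fin n, edgeLabels (i j) (v j.castSucc) (v j.succ)) ∧
    ((List.ofFn fun j => pathMatrix (i j)).prod 2 1 ≠ 0 ↔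
      ∃ v : Fin (n + 1) → Fin 3, v 0 = 2 ∧ v (Fin.last n) = 1 ∧
        ∀ j : Fin n, edgeLabels (i j) (v j.castSucc) (v j.succ))) :=
  ⟨key n i 2 0, key n i 2 1⟩
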